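/- arXiv:2005.01772 — 5 statements merged into one kernel-verified Lean document; each statement's English description precedes it below -/
import Mathlib

section
/- Let Φ : 𝒫 → C(G, ℂ) be the map λ ↦ φ_λ, where 𝒫 carries the subspace topology of ℂ and C(G, ℂ) carries the compact-open topology (the topology of uniform convergence on compact subsets of G). Then Φ is a topological embedding: it is injective, continuous, and a homeomorphism onto its image. -/
/-!
Along the boosts `a_t`, whose `(0,0)`-entry is `cosh t`, one has `φ_λ(a_t) = exp((λ - ρ) t)`.
Restriction to the compact curve `t ↦ a_t`, `t ∈ [0,1]`, is continuous for the compact-open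
topology, so it suffices that `λ ↦ (t ↦ exp((λ - ρ) t))` embeds `𝒫` into `C([0,1], ℂ)`.
On `𝒫` the exponent `λ - ρ` lies in the strip `-ρ ≤ Re ≤ 0`. There the map is `1`-Lipschitz
by the mean value theorem, and evaluating at `t = min 1 (1 / (2|λ - μ|))`, where
`|e^u - 1| ≥ |u| / 2` for `|u| ≤ 1/2`, bounds `|λ - μ|` by the sup distance, so the map is a
uniform embedding.
-/

open Matrix Real Complex MeasureTheory Topology

noncomputable section

/-- The Lorentz form matrix η = diag(−1, 1, …, 1). -/
def lorentzEta (n : ℕ) : Matrix (Fin (n + 1)) (Fin (n + 1)) ℝ :=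
  Matrix.diagonal fun i => if i = 0 then (-1 : ℝ) else 1

/-- `SO₀(1,n)`: matrices `g` with `gᵀ η g = η`, `det g = 1` and `g₀₀ ≥ 1`. -/
def SOo (n : ℕ) : Set (Matrix (Fin (n + 1)) (Fin (n + 1)) ℝ) :=
  {g | gᵀ * lorentzEta n * g = lorentzEta n ∧ g.det = 1 ∧ 1 ≤ g 0 0}

/-- The inverse hyperbolic cosine. -/
def acosh (x : ℝ) : ℝ := Real.log (x + Real.sqrt (x ^ 2 - 1))

/-- The function `φ_λ(g) = exp((λ − ρ)·arccosh(g₀₀))` with `ρ = (n−1)/2`. -/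
def phiM (n : ℕ) (l : ℂ) (g : Matrix (Fin (n + 1)) (Fin (n + 1)) ℝ) : ℂ :=
  Complex.exp ((l - ((n : ℂ) - 1) / 2) * (acosh (g 0 0) : ℝ))

/-- The parameter space `𝒫 = {λ ∈ ℂ | (Im λ = 0 ∧ 0 < Re λ ≤ ρ) ∨ Re λ = 0}`. -/
def Pspace (ρ : ℝ) : Set ℂ :=
  {l | (l.im = 0 ∧ 0 < l.re ∧ l.re ≤ ρ) ∨ l.re = 0}

lemma phi_continuous (n : ℕ) (l : ℂ) :
    Continuous fun g : SOo n => phiM n l g.val := by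
  have h00 : Continuous fun g : SOo n => g.val 0 0 :=
    (continuous_apply (0 : Fin (n + 1))).comp
      ((continuous_apply (0 : Fin (n + 1))).comp continuous_subtype_val)
  have hin : Continuous fun g : SOo n =>
      g.val 0 0 + Real.sqrt ((g.val 0 0) ^ 2 - 1) :=
    h00.add (Real.continuous_sqrt.comp ((h00.pow 2).sub continuous_const))
  have hlog : Continuous fun g : SOo n => acosh (g.val 0 0) := by
    unfold acosh
    refine Real.continuousOn_log.comp_continuous hin fun g => ?_
    have h1 : (1 : ℝ) ≤ g.val 0 0 := g.2.2.2
    have hpos : (0 : ℝ) < g.val 0 0 + Real.sqrt ((g.val 0 0) ^ 2 - 1) := by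
      nlinarith [Real.sqrt_nonneg ((g.val 0 0) ^ 2 - 1)]
    simpa using hpos.ne'
  unfold phiM
  exact Complex.continuous_exp.comp
    (continuous_const.mul (Complex.continuous_ofReal.comp hlog))

/-- The map `Φ : 𝒫 → C(G, ℂ)`, `λ ↦ φ_λ`. -/
def Phi (n : ℕ) (l : Pspace (((n : ℝ) - 1) / 2)) : C(SOo n, ℂ) :=
  ⟨fun g => phiM n l.val g.val, phi_continuous n l.val⟩

lemma Complex.norm_exp_sub_exp_le {a b : ℂ} (ha : a.re ≤ 0) (hb : b.re ≤ 0) :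
    ‖Complex.exp a - Complex.exp b‖ ≤ ‖a - b‖ := by
  have h := (convex_halfSpace_re_le 0).norm_image_sub_le_of_norm_deriv_le (f := Complex.exp)
    (C := 1) (fun z _ => Complex.differentiableAt_exp) (fun z hz => ?_) hb ha
  · simpa using h
  · rw [Complex.deriv_exp, Complex.norm_exp]
    exact Real.exp_le_one_iff.mpr hz

lemma Complex.norm_div_two_le_norm_exp_sub_one {u : ℂ} (hu : ‖u‖ ≤ 1 / 2) :
    ‖u‖ / 2 ≤ ‖Complex.exp u - 1‖ := by
  have hquad := Complex.norm_exp_sub_one_sub_id_le (hu.trans (by norm_num))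
  have htri : ‖u‖ ≤ ‖Complex.exp u - 1‖ + ‖Complex.exp u - 1 - u‖ := by
    simpa using norm_sub_le (Complex.exp u - 1) (Complex.exp u - 1 - u)
  nlinarith [norm_nonneg u]

def expCurve (z : ℂ) : C(unitInterval, ℂ) :=
  ⟨fun t => Complex.exp (z * (t : ℝ)), by fun_prop⟩

lemma expCurve_apply (z : ℂ) (t : unitInterval) : expCurve z t = Complex.exp (z * (t : ℝ)) :=
  rfl

lemma dist_expCurve_le {z w : ℂ} (hz : z.re ≤ 0) (hw : w.re ≤ 0) :
    dist (expCurve z) (expCurve w) ≤ dist z w := by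
  refine (ContinuousMap.dist_le dist_nonneg).2 fun t => ?_
  obtain ⟨ht0, ht1⟩ := t.2
  calc dist (expCurve z t) (expCurve w t)
      ≤ ‖z * (t : ℝ) - w * (t : ℝ)‖ := by
        rw [Complex.dist_eq]
        exact Complex.norm_exp_sub_exp_le (by simpa using mul_nonpos_of_nonpos_of_nonneg hz ht0)
          (by simpa using mul_nonpos_of_nonpos_of_nonneg hw ht0)
    _ = dist z w * t := by
        rw [← sub_mul, norm_mul, Complex.norm_real, Real.norm_of_nonneg ht0, Complex.dist_eq]
    _ ≤ dist z w := mul_le_of_le_one_right dist_nonneg ht1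

lemma exp_re_mul_le_dist_expCurve {z w : ℂ} (hw : w.re ≤ 0) :
    Real.exp w.re * (min ‖z - w‖ (1 / 2) / 2) ≤ dist (expCurve z) (expCurve w) := by
  obtain ⟨t, ht, hzwt⟩ : ∃ t ∈ unitInterval, ‖z - w‖ * t = min ‖z - w‖ (1 / 2) := by
    by_cases h : ‖z - w‖ ≤ 1 / 2
    · exact ⟨1, unitInterval.one_mem, by rw [mul_one, min_eq_left h]⟩
    · refine ⟨(2 * ‖z - w‖)⁻¹, ⟨by positivity, inv_le_one_of_one_le₀ (by linarith)⟩, ?_⟩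
      have hpos : 0 < ‖z - w‖ := by linarith
      rw [min_eq_right (by linarith)]
      field_simp
  have hnorm : ‖(z - w) * (t : ℂ)‖ = min ‖z - w‖ (1 / 2) := by
    rw [norm_mul, Complex.norm_real, Real.norm_of_nonneg ht.1, hzwt]
  calc Real.exp w.re * (min ‖z - w‖ (1 / 2) / 2)
      ≤ ‖Complex.exp (w * t)‖ * ‖Complex.exp ((z - w) * t) - 1‖ := by
        gcongr
        · rw [Complex.norm_exp, Complex.re_mul_ofReal]
          exact Real.exp_le_exp.2 (by nlinarith [ht.1, ht.2])
        · rw [← hnorm]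
          exact Complex.norm_div_two_le_norm_exp_sub_one (hnorm ▸ min_le_right _ _)
    _ = dist (expCurve z ⟨t, ht⟩) (expCurve w ⟨t, ht⟩) := by
        rw [← norm_mul, mul_sub, ← Complex.exp_add, Complex.dist_eq, expCurve_apply,
          expCurve_apply, mul_one]
        ring_nf
    _ ≤ dist (expCurve z) (expCurve w) := ContinuousMap.dist_apply_le_dist _

lemma isUniformEmbedding_expCurve_sub {s : Set ℂ} {c : ℂ} {ρ : ℝ}
    (hs : ∀ z ∈ s, -ρ ≤ (z - c).re ∧ (z - c).re ≤ 0) :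
    IsUniformEmbedding fun z : s => expCurve (z - c) := by
  rw [Metric.isUniformEmbedding_iff']
  refine ⟨fun ε hε => ⟨ε, hε, fun {a b} hab => ?_⟩, fun δ hδ => ?_⟩
  · refine (dist_expCurve_le (hs a a.2).2 (hs b b.2).2).trans_lt ?_
    rwa [dist_sub_right]
  · refine ⟨Real.exp (-ρ) * (min δ (1 / 2) / 2), by positivity, fun {a b} hab => ?_⟩
    by_contra! hδab
    have hlower := exp_re_mul_le_dist_expCurve (z := a - c) (hs b b.2).2
    rw [sub_sub_sub_cancel_right, ← dist_eq_norm, ← Subtype.dist_eq] at hlower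
    have : Real.exp (-ρ) * (min δ (1 / 2) / 2)
        ≤ Real.exp (b - c : ℂ).re * (min (dist a b) (1 / 2) / 2) := by
      gcongr
      exact (hs b b.2).1
    linarith

lemma Pspace_re_mem_Icc {ρ : ℝ} (hρ : 0 ≤ ρ) {l : ℂ} (hl : l ∈ Pspace ρ) : l.re ∈ Set.Icc 0 ρ := by
  rcases hl with ⟨-, h0, hρl⟩ | h
  · exact ⟨h0.le, hρl⟩
  · exact ⟨h.ge, h ▸ hρ⟩

lemma acosh_cosh {t : ℝ} (ht : 0 ≤ t) : acosh (Real.cosh t) = t := by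
  have hsq : Real.cosh t ^ 2 - 1 = Real.sinh t ^ 2 := by
    linarith [Real.cosh_sq_sub_sinh_sq t]
  rw [acosh, hsq, Real.sqrt_sq (Real.sinh_nonneg_iff.2 ht), Real.cosh_add_sinh, Real.log_exp]

lemma continuousOn_acosh : ContinuousOn acosh (Set.Ici 1) := by
  refine ContinuousOn.log (by fun_prop) fun x (hx : 1 ≤ x) => ?_
  linarith [Real.sqrt_nonneg (x ^ 2 - 1)]

def boost (n : ℕ) (t : ℝ) : Matrix (Fin (n + 1)) (Fin (n + 1)) ℝ := fun i j =>
  if i = j then (if (i : ℕ) ≤ 1 then Real.cosh t else 1)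
  else if (i : ℕ) + j = 1 then Real.sinh t else 0

lemma continuous_boost (n : ℕ) : Continuous (boost n) := by
  refine continuous_pi fun i => continuous_pi fun j => ?_
  unfold boost
  split_ifs <;> fun_prop

lemma boost_zero_zero (n : ℕ) (t : ℝ) : boost n t 0 0 = Real.cosh t := by
  simp [boost]

lemma boost_mem_SOo {n : ℕ} (hn : n = 2 ∨ n = 3) (t : ℝ) : boost n t ∈ SOo n := by
  have hyp := Real.cosh_sq_sub_sinh_sq t
  refine ⟨?_, ?_, by simp [boost, Real.one_le_cosh]⟩ <;> rcases hn with rfl | rfl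
  · ext i j
    fin_cases i <;> fin_cases j <;>
      simp [Matrix.mul_apply, boost, lorentzEta, Fin.sum_univ_succ] <;> nlinarith
  · ext i j
    fin_cases i <;> fin_cases j <;>
      simp [Matrix.mul_apply, boost, lorentzEta, Fin.sum_univ_succ] <;> nlinarith
  · simp [Matrix.det_fin_three, boost]
    nlinarith
  · simp +decide [Matrix.det_succ_row_zero, Fin.sum_univ_succ, Matrix.submatrix, boost]
    nlinarith

lemma continuous_Phi (n : ℕ) : Continuous (Phi n) := by
  apply ContinuousMap.continuous_of_continuous_uncurry
  have hacosh : Continuous fun g : SOo n => acosh (g.val 0 0) :=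
    continuousOn_acosh.comp_continuous (continuous_subtype_val.matrix_elem 0 0) fun g => g.2.2.2
  exact Complex.continuous_exp.comp <|
    ((continuous_subtype_val.comp continuous_fst).sub continuous_const).mul
      (Complex.continuous_ofReal.comp (hacosh.comp continuous_snd))

/-- `Φ : 𝒫 → C(G, ℂ)` is a topological embedding, where `𝒫 ⊆ ℂ` carries the subspace
topology and `C(G, ℂ)` the compact-open topology. -/
theorem statement0 (n : ℕ) (hn : n = 2 ∨ n = 3) :
    Topology.IsEmbedding (Phi n) := by
  set ρ : ℝ := ((n : ℝ) - 1) / 2 with hρ_def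
  have hρ : 0 ≤ ρ := by rcases hn with rfl | rfl <;> norm_num [ρ]
  let γ : C(unitInterval, SOo n) := ⟨fun t => ⟨boost n t, boost_mem_SOo hn t⟩,
    ((continuous_boost n).comp continuous_subtype_val).subtype_mk _⟩
  have hγ : (fun f : C(SOo n, ℂ) => f.comp γ) ∘ Phi n = fun l => expCurve (l.val - ρ) := by
    funext l
    ext t
    simp [Phi, phiM, γ, expCurve_apply, boost_zero_zero, acosh_cosh t.2.1, hρ_def]
  refine .of_comp (continuous_Phi n) (ContinuousMap.continuous_precomp γ) ?_
  rw [hγ]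
  refine (isUniformEmbedding_expCurve_sub (ρ := ρ) fun l hl => ?_).isEmbedding
  obtain ⟨h0, hρl⟩ := Pspace_re_mem_Icc hρ hl
  simp only [Complex.sub_re, Complex.ofReal_re]
  constructor <;> linarith

end
end

section
/- If (λ_j) is a sequence in 𝒫 and λ ∈ 𝒫 are such that φ_{λ_j} → φ_λ uniformly on every compact subset of G, then λ_j → λ in ℂ. -/
open Matrix Real Complex MeasureTheory Topology

noncomputable section

/-!
Along the boosts `a_t` in the `(x₀, x₁)`-plane one has `(a_t)₀₀ = cosh t`, so
`φ_λ(a_t) = exp ((λ - ρ) t)` for `t ≥ 0`, and the hypothesis on the compact set `{a_t | t ∈ [0, 1]}`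
says that `exp (δ_j t) → 1` uniformly on `[0, 1]`, where `δ_j = λ_j - λ`. This forces
`|Im δ_j| ≤ π / 2`: otherwise `exp (δ_j t)` meets the imaginary axis for some `t ≤ 1`. Hence
`δ_j = log (exp δ_j)`, and `exp δ_j → 1` gives `δ_j → 0`.
-/

open Filter Set

lemma abs_im_le_pi_div_two_of_norm_cexp_mul_sub_one_lt {δ : ℂ}
    (h : ∀ t ∈ Icc (0 : ℝ) 1, ‖cexp (δ * t) - 1‖ < 1) : |δ.im| ≤ π / 2 := by
  by_contra! hlarge
  have hpos : 0 < |δ.im| := lt_trans (by positivity) hlarge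
  set t₀ := π / 2 / |δ.im|
  have ht₀ : t₀ ∈ Icc (0 : ℝ) 1 := ⟨by positivity, (div_le_one hpos).2 hlarge.le⟩
  have hre : (cexp (δ * t₀)).re = 0 := by
    have hcos : Real.cos (δ.im * t₀) = 0 := by
      rw [← Real.cos_abs, abs_mul, abs_of_pos (by positivity : 0 < t₀),
        mul_div_cancel₀ _ hpos.ne', Real.cos_pi_div_two]
    simp [Complex.exp_re, hcos]
  have := (abs_re_le_norm _).trans_lt (h t₀ ht₀)
  simp [hre] at this

lemma norm_le_of_norm_cexp_mul_sub_one_le {δ : ℂ} {η : ℝ} (hη : η ≤ 1 / 2)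
    (h : ∀ t ∈ Icc (0 : ℝ) 1, ‖cexp (δ * t) - 1‖ ≤ η) : ‖δ‖ ≤ 3 / 2 * η := by
  have him := abs_im_le_pi_div_two_of_norm_cexp_mul_sub_one_lt fun t ht =>
    (h t ht).trans_lt (by linarith)
  have hlog : log (cexp δ) = δ := by
    have := abs_le.1 him
    exact log_exp (by linarith [pi_pos]) (by linarith [pi_pos])
  have h1 : ‖cexp δ - 1‖ ≤ η := by simpa using h 1 ⟨zero_le_one, le_rfl⟩
  calc ‖δ‖ = ‖log (1 + (cexp δ - 1))‖ := by rw [add_sub_cancel, hlog]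
    _ ≤ 3 / 2 * ‖cexp δ - 1‖ := norm_log_one_add_half_le_self (h1.trans hη)
    _ ≤ 3 / 2 * η := by gcongr

theorem tendsto_of_tendstoUniformlyOn_cexp_mul {ι : Type*} {F : Filter ι} {a : ι → ℂ} {a₀ : ℂ}
    (h : TendstoUniformlyOn (fun j (t : ℝ) => cexp (a j * t)) (fun t => cexp (a₀ * t)) F
      (Icc 0 1)) :
    Tendsto a F (𝓝 a₀) := by
  rw [Metric.tendsto_nhds]
  intro ε hε
  set η := min (1 / 2) (ε / 2)
  have hM : 0 < Real.exp ‖a₀‖ := Real.exp_pos _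
  filter_upwards [Metric.tendstoUniformlyOn_iff.1 h (η / Real.exp ‖a₀‖) (by positivity)]
    with j hj
  have hclose : ∀ t ∈ Icc (0 : ℝ) 1, ‖cexp ((a j - a₀) * t) - 1‖ ≤ η := by
    intro t ht
    have hfactor : cexp ((a j - a₀) * t) - 1 =
        (cexp (a j * t) - cexp (a₀ * t)) * cexp (-(a₀ * t)) := by
      rw [sub_mul, sub_mul, ← Complex.exp_add, ← Complex.exp_add, ← sub_eq_add_neg,
        ← sub_eq_add_neg, sub_self, Complex.exp_zero]
    have hbound : ‖cexp (-(a₀ * t))‖ ≤ Real.exp ‖a₀‖ := by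
      refine (norm_exp_le_exp_norm _).trans (Real.exp_le_exp.2 ?_)
      rw [norm_neg, norm_mul, norm_real, Real.norm_eq_abs, abs_of_nonneg ht.1]
      exact mul_le_of_le_one_right (norm_nonneg _) ht.2
    rw [hfactor, norm_mul, ← dist_eq_norm, dist_comm]
    calc _ ≤ η / Real.exp ‖a₀‖ * Real.exp ‖a₀‖ :=
          mul_le_mul (hj t ht).le hbound (norm_nonneg _) (by positivity)
      _ = η := div_mul_cancel₀ _ hM.ne'
  rw [dist_eq_norm]
  calc ‖a j - a₀‖ ≤ 3 / 2 * η := norm_le_of_norm_cexp_mul_sub_one_le (min_le_left _ _) hclose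
    _ ≤ 3 / 2 * (ε / 2) := by gcongr; exact min_le_right _ _
    _ < ε := by linarith

def finTwoSumEquiv (m : ℕ) : Fin 2 ⊕ Fin m ≃ Fin (m + 1 + 1) :=
  finSumFinEquiv.trans (finCongr (by omega))

lemma finTwoSumEquiv_symm_zero (m : ℕ) : (finTwoSumEquiv m).symm 0 = Sum.inl 0 := by
  rw [Equiv.symm_apply_eq]; rfl

lemma lorentzEta_eq_reindex (m : ℕ) :
    lorentzEta (m + 1) =
      reindex (finTwoSumEquiv m) (finTwoSumEquiv m) (fromBlocks (diagonal ![-1, 1]) 0 0 1) := by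
  rw [← diagonal_one, fromBlocks_diagonal, reindex_apply, submatrix_diagonal_equiv, lorentzEta]
  congr 1
  funext i
  obtain ⟨s, rfl⟩ := (finTwoSumEquiv m).surjective i
  rcases s with k | k
  · fin_cases k <;> simp [finTwoSumEquiv, Fin.ext_iff]
  · simp [finTwoSumEquiv, Fin.ext_iff]

def lorentzBoost (m : ℕ) (t : ℝ) : Matrix (Fin (m + 1 + 1)) (Fin (m + 1 + 1)) ℝ :=
  reindex (finTwoSumEquiv m) (finTwoSumEquiv m)
    (fromBlocks !![Real.cosh t, Real.sinh t; Real.sinh t, Real.cosh t] 0 0 1)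

lemma lorentzBoost_apply_zero_zero (m : ℕ) (t : ℝ) : lorentzBoost m t 0 0 = Real.cosh t := by
  simp [lorentzBoost, finTwoSumEquiv_symm_zero]

lemma continuous_lorentzBoost (m : ℕ) : Continuous (lorentzBoost m) := by
  refine Continuous.matrix_reindex
    (Continuous.matrix_fromBlocks ?_ continuous_const continuous_const continuous_const) _ _
  refine continuous_pi fun i => continuous_pi fun j => ?_
  fin_cases i <;> fin_cases j <;> simp <;> fun_prop

lemma lorentzBoost_mem_SOo (m : ℕ) (t : ℝ) : lorentzBoost m t ∈ SOo (m + 1) := by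
  refine ⟨?_, ?_, (lorentzBoost_apply_zero_zero m t).symm ▸ Real.one_le_cosh t⟩
  · rw [lorentzEta_eq_reindex, lorentzBoost, transpose_reindex]
    simp only [reindex_apply, submatrix_mul_equiv]
    congr 1
    rw [fromBlocks_transpose, fromBlocks_multiply, fromBlocks_multiply]
    simp only [transpose_zero, transpose_one, Matrix.mul_zero, Matrix.zero_mul, Matrix.mul_one,
      mul_one, add_zero, zero_add, fromBlocks_inj, and_self, and_true]
    ext i j
    fin_cases i <;> fin_cases j <;> simp [mul_apply, Fin.sum_univ_two] <;>
      linarith [Real.cosh_sq_sub_sinh_sq t]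
  · rw [lorentzBoost, det_reindex_self, det_fromBlocks_zero₂₁, det_fin_two_of, det_one]
    linarith [Real.cosh_sq_sub_sinh_sq t]

lemma phiM_lorentzBoost (m : ℕ) (l : ℂ) {t : ℝ} (ht : 0 ≤ t) :
    phiM (m + 1) l (lorentzBoost m t) = cexp ((l - (((m + 1 : ℕ) : ℂ) - 1) / 2) * t) := by
  rw [phiM, lorentzBoost_apply_zero_zero, show acosh = Real.arcosh from rfl, Real.arcosh_cosh ht]

theorem tendsto_of_tendstoUniformlyOn_phiM {ι : Type*} {F : Filter ι} (m : ℕ) {l : ι → ℂ}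
    {l₀ : ℂ} (h : ∀ C : Set (SOo (m + 1)), IsCompact C →
      TendstoUniformlyOn (fun j (g : SOo (m + 1)) => phiM (m + 1) (l j) g.val)
        (fun g : SOo (m + 1) => phiM (m + 1) l₀ g.val) F C) :
    Tendsto l F (𝓝 l₀) := by
  set ρ : ℂ := (((m + 1 : ℕ) : ℂ) - 1) / 2
  let γ : ℝ → SOo (m + 1) := fun t => ⟨lorentzBoost m t, lorentzBoost_mem_SOo m t⟩
  have hγ : Continuous γ := (continuous_lorentzBoost m).subtype_mk _
  have hboost := ((h _ ((isCompact_Icc (a := 0) (b := 1)).image hγ)).comp γ).mono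
    (subset_preimage_image γ _)
  have hexp : TendstoUniformlyOn (fun j (t : ℝ) => cexp ((l j - ρ) * t))
      (fun t => cexp ((l₀ - ρ) * t)) F (Icc 0 1) := by
    refine (hboost.congr (Eventually.of_forall fun j t ht => ?_)).congr_right fun t ht => ?_
    · exact phiM_lorentzBoost m (l j) ht.1
    · exact phiM_lorentzBoost m l₀ ht.1
  simpa using (tendsto_of_tendstoUniformlyOn_cexp_mul hexp).add_const ρ

theorem statement3_general (n : ℕ) (hn : n = 2 ∨ n = 3)
    (l : ℕ → ℂ)
    (l₀ : ℂ)
    (h : ∀ C : Set (SOo n), IsCompact C →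
      TendstoUniformlyOn (fun j (g : SOo n) => phiM n (l j) g.val)
        (fun g : SOo n => phiM n l₀ g.val) Filter.atTop C) :
    Filter.Tendsto l Filter.atTop (nhds l₀) := by
  obtain ⟨m, rfl⟩ : ∃ m, n = m + 1 := ⟨n - 1, by omega⟩
  exact tendsto_of_tendstoUniformlyOn_phiM m h

/-- If `(λ_j)` is a sequence in `𝒫` and `λ ∈ 𝒫` are such that `φ_{λ_j} → φ_λ` uniformly
on every compact subset of `G`, then `λ_j → λ` in `ℂ`. -/
theorem statement3 (n : ℕ) (hn : n = 2 ∨ n = 3)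
    (l : ℕ → ℂ) (hl : ∀ j, l j ∈ Pspace (((n : ℝ) - 1) / 2))
    (l₀ : ℂ) (hl₀ : l₀ ∈ Pspace (((n : ℝ) - 1) / 2))
    (h : ∀ C : Set (SOo n), IsCompact C →
      TendstoUniformlyOn (fun j (g : SOo n) => phiM n (l j) g.val)
        (fun g : SOo n => phiM n l₀ g.val) Filter.atTop C) :
    Filter.Tendsto l Filter.atTop (nhds l₀) :=
  statement3_general n hn l l₀ h
end
end

section
/- Let φ : G → ℂ be a continuous bi-K-invariant spherical function, and define χ_φ(f) = ∫_G f(s) φ(s⁻¹) dμ_G(s) for continuous compactly supported f. Then χ_φ is multiplicative on the bi-K-invariant functions: for all f, g ∈ C_c(K\G/K), χ_φ(f ⋆ g) = χ_φ(f) · χ_φ(g). -/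
open MeasureTheory

/-
Integrating `f ⋆ g` against `φ ∘ inv` and swapping the integrals gives
`∫ f(t) (∫ g(s) φ(s⁻¹ t⁻¹) ds) dt`. The inner integral is `χ_φ(g) φ(t⁻¹)`: by left
`K`-invariance of `g` and of `μ_G` it may be averaged over `s⁻¹ ↦ s⁻¹ k`, and the
functional equation `∫_K φ(s⁻¹ k t⁻¹) dk = φ(s⁻¹) φ(t⁻¹)` factors the average.
-/

theorem HasCompactSupport.uncurry_mul_of_compactSpace {X Y M : Type*} [TopologicalSpace X]
    [TopologicalSpace Y] [CompactSpace Y] [MulZeroClass M] {g : X → M}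
    (hg : HasCompactSupport g) (F : X → Y → M) :
    HasCompactSupport (Function.uncurry fun x y ↦ g x * F x y) := by
  refine .intro' (hg.prod isCompact_univ) ((isClosed_tsupport g).prod isClosed_univ) ?_
  rintro ⟨x, y⟩ hxy
  have hx : x ∉ tsupport g := fun hx ↦ hxy ⟨hx, Set.mem_univ y⟩
  simp [image_eq_zero_of_notMem_tsupport hx]

section Convolution

variable {G M : Type*} [Group G] [TopologicalSpace G] [IsTopologicalGroup G]

theorem hasCompactSupport_convolution_integrand [MulZeroClass M] {f g : G → M}
    (hf : HasCompactSupport f) (hg : HasCompactSupport g) :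
    HasCompactSupport (Function.uncurry fun s t ↦ f t * g (t⁻¹ * s)) := by
  refine .of_support_subset_isCompact
    ((hf.prod hg).image (continuous_fst.mul continuous_snd |>.prodMk continuous_fst)) ?_
  rintro ⟨s, t⟩ hst
  refine ⟨(t, t⁻¹ * s), ⟨subset_tsupport f (left_ne_zero_of_mul hst),
    subset_tsupport g (right_ne_zero_of_mul hst)⟩, by simp⟩

variable [MeasurableSpace G] [BorelSpace G] (μ : Measure G) [μ.IsMulLeftInvariant]
  {𝕜 : Type*} [RCLike 𝕜]

theorem integral_convolution_mul [IsFiniteMeasureOnCompacts μ]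
    {f g ψ : G → 𝕜} (hf : Continuous f) (hfc : HasCompactSupport f) (hg : Continuous g)
    (hgc : HasCompactSupport g) (hψ : Continuous ψ) :
    ∫ s, (∫ t, f t * g (t⁻¹ * s) ∂μ) * ψ s ∂μ = ∫ t, f t * ∫ s, g s * ψ (t * s) ∂μ ∂μ := by
  calc ∫ s, (∫ t, f t * g (t⁻¹ * s) ∂μ) * ψ s ∂μ
      = ∫ s, ∫ t, f t * g (t⁻¹ * s) * ψ s ∂μ ∂μ := by simp_rw [integral_mul_const]
    _ = ∫ t, ∫ s, f t * g (t⁻¹ * s) * ψ s ∂μ ∂μ :=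
        integral_integral_swap_of_hasCompactSupport
          (f := fun s t ↦ f t * g (t⁻¹ * s) * ψ s) (by fun_prop)
          (hasCompactSupport_convolution_integrand hfc hgc).mul_right
    _ = ∫ t, ∫ s, f t * g (t⁻¹ * (t * s)) * ψ (t * s) ∂μ ∂μ := by
        congr 1 with t
        exact (integral_mul_left_eq_self (fun s ↦ f t * g (t⁻¹ * s) * ψ s) t).symm
    _ = ∫ t, f t * ∫ s, g s * ψ (t * s) ∂μ ∂μ := by
        simp_rw [inv_mul_cancel_left, mul_assoc, integral_const_mul]

theorem integral_mul_comp_inv_mul_mul_eq_of_forall_mul_left_eq {g ψ : G → 𝕜} {k : G}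
    (hgk : ∀ s, g (k * s) = g s) (t : G) :
    ∫ s, g s * ψ (s⁻¹ * k * t) ∂μ = ∫ s, g s * ψ (s⁻¹ * t) ∂μ := by
  rw [← integral_mul_left_eq_self _ k]
  simp_rw [hgk, mul_inv_rev, inv_mul_cancel_right]

theorem integral_mul_spherical_comp_inv_mul [IsFiniteMeasureOnCompacts μ] (K : Subgroup G)
    [CompactSpace K] [MeasurableSpace K] [BorelSpace K] (ν : Measure K) [IsProbabilityMeasure ν]
    {φ g : G → 𝕜} (hφ : Continuous φ) (hsph : ∀ s t : G, φ s * φ t = ∫ k : K, φ (s * k * t) ∂ν)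
    (hg : Continuous g) (hgc : HasCompactSupport g) (hgK : ∀ k ∈ K, ∀ s, g (k * s) = g s)
    (t : G) :
    ∫ s, g s * φ (s⁻¹ * t) ∂μ = (∫ s, g s * φ s⁻¹ ∂μ) * φ t := by
  symm
  calc (∫ s, g s * φ s⁻¹ ∂μ) * φ t
      = ∫ s, ∫ k : K, g s * φ (s⁻¹ * k * t) ∂ν ∂μ := by
        simp_rw [← integral_mul_const, mul_assoc (g _), hsph, integral_const_mul]
    _ = ∫ k : K, ∫ s, g s * φ (s⁻¹ * k * t) ∂μ ∂ν :=
        integral_integral_swap_of_hasCompactSupport (by fun_prop)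
          (hgc.uncurry_mul_of_compactSpace _)
    _ = ∫ s, g s * φ (s⁻¹ * t) ∂μ := by
        simp_rw [integral_mul_comp_inv_mul_mul_eq_of_forall_mul_left_eq μ
          (hgK _ (SetLike.coe_mem _)), integral_const, probReal_univ, one_smul]

end Convolution

theorem statement8_general {G : Type*} [Group G] [TopologicalSpace G] [IsTopologicalGroup G]
    [MeasurableSpace G] [BorelSpace G]
    (μG : Measure G) [μG.IsHaarMeasure]
    (K : Subgroup G) (hK : IsCompact (K : Set G))
    [MeasurableSpace K] [BorelSpace K]
    (μK : Measure K) [IsProbabilityMeasure μK]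
    (φ : G → ℂ) (hφ : Continuous φ)
    (hsph : ∀ s t : G, φ s * φ t = ∫ k : K, φ (s * (k : G) * t) ∂μK)
    (f g : G → ℂ)
    (hf : Continuous f) (hfc : HasCompactSupport f)
    (hg : Continuous g) (hgc : HasCompactSupport g)
    (hgbi : ∀ s : G, ∀ k ∈ K, ∀ k' ∈ K, g (k * s * k') = g s) :
    ∫ s, (∫ t, f t * g (t⁻¹ * s) ∂μG) * φ s⁻¹ ∂μG
      = (∫ s, f s * φ s⁻¹ ∂μG) * ∫ s, g s * φ s⁻¹ ∂μG := by
  have : CompactSpace K := isCompact_iff_compactSpace.mp hK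
  have hgK : ∀ k ∈ K, ∀ s, g (k * s) = g s := fun k hk s ↦ by
    simpa using hgbi s k hk 1 K.one_mem
  have inner (t : G) : ∫ s, g s * φ (t * s)⁻¹ ∂μG = (∫ s, g s * φ s⁻¹ ∂μG) * φ t⁻¹ := by
    simp_rw [mul_inv_rev]
    exact integral_mul_spherical_comp_inv_mul μG K μK hφ hsph hg hgc hgK t⁻¹
  rw [integral_convolution_mul μG hf hfc hg hgc (ψ := fun s ↦ φ s⁻¹) (by fun_prop)]
  simp_rw [inner, mul_left_comm (f _), integral_const_mul, mul_comm]

/-- `χ_φ` is multiplicative on `C_c(K\G/K)`: for spherical `φ` and bi-`K`-invariant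
`f, g ∈ C_c(K\G/K)` one has `χ_φ(f ⋆ g) = χ_φ(f)·χ_φ(g)`, where
`χ_φ(f) = ∫_G f(s) φ(s⁻¹) dμ_G(s)` and `(f ⋆ g)(s) = ∫_G f(t) g(t⁻¹ s) dμ_G(t)`. -/
theorem statement8 {G : Type*} [Group G] [TopologicalSpace G] [IsTopologicalGroup G]
    [LocallyCompactSpace G] [T2Space G] [MeasurableSpace G] [BorelSpace G]
    (μG : Measure G) [μG.IsHaarMeasure] [μG.Regular]
    (K : Subgroup G) (hK : IsCompact (K : Set G))
    [MeasurableSpace K] [BorelSpace K]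
    (μK : Measure K) [IsProbabilityMeasure μK]
    [μK.IsMulLeftInvariant] [μK.IsMulRightInvariant] [μK.IsInvInvariant]
    (φ : G → ℂ) (hφ : Continuous φ) (hφ0 : φ ≠ 0)
    (hφbi : ∀ s : G, ∀ k ∈ K, ∀ k' ∈ K, φ (k * s * k') = φ s)
    (hsph : ∀ s t : G, φ s * φ t = ∫ k : K, φ (s * (k : G) * t) ∂μK)
    (f g : G → ℂ)
    (hf : Continuous f) (hfc : HasCompactSupport f)
    (hfbi : ∀ s : G, ∀ k ∈ K, ∀ k' ∈ K, f (k * s * k') = f s)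
    (hg : Continuous g) (hgc : HasCompactSupport g)
    (hgbi : ∀ s : G, ∀ k ∈ K, ∀ k' ∈ K, g (k * s * k') = g s) :
    ∫ s, (∫ t, f t * g (t⁻¹ * s) ∂μG) * φ s⁻¹ ∂μG
      = (∫ s, f s * φ s⁻¹ ∂μG) * ∫ s, g s * φ s⁻¹ ∂μG :=
  statement8_general μG K hK μK φ hφ hsph f g hf hfc hg hgc hgbi
end

section
/- Let 0 < λ₀ ≤ ρ be real numbers and let S be a subset of the interval (0, λ₀] with λ₀ ∈ S, such that S is closed in the subspace topology of (0, ρ] ⊆ ℝ. If S ≠ (0, λ₀], then S contains a nonempty subset U which is compact and open in the subspace topology of S. -/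
/-- Let `0 < lam₀ ≤ ρ` and let `S ⊆ (0, lam₀]` with `lam₀ ∈ S` be closed in the subspace
topology of `(0, ρ]`. If `S ≠ (0, lam₀]`, then `S` contains a nonempty subset `U` which
is compact and open in the subspace topology of `S`. -/
theorem statement12 (ρ lam₀ : ℝ) (hlam₀ : 0 < lam₀) (hρ : lam₀ ≤ ρ)
    (S : Set ℝ) (hsub : S ⊆ Set.Ioc 0 lam₀) (hmem : lam₀ ∈ S)
    (hclosed : IsClosed (Subtype.val ⁻¹' S : Set (Set.Ioc (0 : ℝ) ρ)))
    (hne : S ≠ Set.Ioc 0 lam₀) :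
    ∃ U : Set ℝ, U ⊆ S ∧ U.Nonempty ∧ IsCompact U ∧
      IsOpen (Subtype.val ⁻¹' U : Set S) := by
  -- pick x ∈ (0, lam₀] \ S
  obtain ⟨x, hxI, hxS⟩ : ∃ x, x ∈ Set.Ioc 0 lam₀ ∧ x ∉ S := by
    by_contra h
    push_neg at h
    exact hne (Set.Subset.antisymm hsub h)
  -- S equals t ∩ Ioc 0 ρ for some closed t
  rw [isClosed_induced_iff] at hclosed
  obtain ⟨t, ht, hts⟩ := hclosed
  have hSeq : S = t ∩ Set.Ioc 0 ρ := by
    ext y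
    constructor
    · intro hy
      have hyI : y ∈ Set.Ioc 0 ρ := ⟨(hsub hy).1, (hsub hy).2.trans hρ⟩
      have : (⟨y, hyI⟩ : Set.Ioc (0:ℝ) ρ) ∈ Subtype.val ⁻¹' S := hy
      rw [← hts] at this
      exact ⟨this, hyI⟩
    · rintro ⟨hyt, hyI⟩
      have : (⟨y, hyI⟩ : Set.Ioc (0:ℝ) ρ) ∈ Subtype.val ⁻¹' t := hyt
      rw [hts] at this
      exact this
  refine ⟨S ∩ Set.Icc x lam₀, Set.inter_subset_left, ⟨lam₀, hmem, hxI.2, le_rfl⟩, ?_, ?_⟩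
  · -- compact: equals (t ∩ Icc x lam₀), closed and bounded
    have heq : S ∩ Set.Icc x lam₀ = t ∩ Set.Icc x lam₀ := by
      rw [hSeq]
      ext y
      simp only [Set.mem_inter_iff, Set.mem_Icc, Set.mem_Ioc, and_assoc]
      constructor
      · tauto
      · rintro ⟨h1, h2, h3⟩
        exact ⟨h1, lt_of_lt_of_le hxI.1 h2, h3.trans hρ, h2, h3⟩
    rw [heq]
    exact isCompact_Icc.inter_left ht
  · -- open in S: equals preimage of Ioi x
    have heq : (Subtype.val ⁻¹' (S ∩ Set.Icc x lam₀) : Set S) = Subtype.val ⁻¹' Set.Ioi x := by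
      ext ⟨y, hy⟩
      simp only [Set.mem_preimage, Set.mem_inter_iff, Set.mem_Icc, Set.mem_Ioi]
      constructor
      · rintro ⟨-, h2, -⟩
        exact lt_of_le_of_ne h2 (fun h => hxS (h ▸ hy))
      · intro h
        exact ⟨hy, h.le, (hsub hy).2⟩
    rw [heq]
    exact (continuous_subtype_val.isOpen_preimage _ isOpen_Ioi)
end

section
/- Let G be a group, K ⊆ G a subgroup which is a compact Hausdorff topological group with normalized Haar probability measure μ_K, H a complex Hilbert space, and π a group homomorphism from G to the unitary operators on H such that for every w ∈ H the map K → H, k ↦ π(k)w, is continuous. Let v ∈ H be a unit vector with π(k)v = v for all k ∈ K, and assume every K-invariant vector is a scalar multiple of v (i.e., if w ∈ H satisfies π(k)w = w for all k ∈ K, then w = c·v for some c ∈ ℂ). Then the matrix coefficient s ↦ ⟨π(s)v, v⟩ satisfies the spherical identity: for all s, t ∈ G, ∫_K ⟨π(s k t)v, v⟩ dμ_K(k) = ⟨π(s)v, v⟩ · ⟨π(t)v, v⟩. -/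
open MeasureTheory
open scoped InnerProductSpace

/-!
Averaging `k ↦ π(k)π(t)v` over `K` gives a `K`-fixed vector, hence a multiple `c • v`; pairing
with the fixed unit vector `v` identifies `c = ⟪v, π(t)v⟫`. Applying `π(s)` under the integral and
pairing with `v` then splits `∫_K ⟪π(skt)v, v⟫` into the product of the two coefficients.
-/

theorem integral_inner_const {α 𝕜 E : Type*} [MeasurableSpace α] {μ : Measure α} [RCLike 𝕜]
    [NormedAddCommGroup E] [InnerProductSpace 𝕜 E] [NormedSpace ℝ E] [CompleteSpace E] {f : α → E}
    (hf : Integrable f μ) (c : E) :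
    ∫ x, ⟪f x, c⟫_𝕜 ∂μ = ⟪∫ x, f x ∂μ, c⟫_𝕜 := by
  simp_rw [← inner_conj_symm _ c]
  rw [integral_conj, integral_inner hf]

section OrbitAverage

variable {G 𝕜 E : Type*} [Group G] [RCLike 𝕜] {K : Subgroup G} [MeasurableSpace K]
  (μK : Measure K)

theorem map_integral_orbit_of_mem [NormedAddCommGroup E] [NormedSpace 𝕜 E] [NormedSpace ℝ E]
    [CompleteSpace E] [MeasurableMul K] [μK.IsMulLeftInvariant] (π : G →* (E ≃ₗᵢ[𝕜] E)) (w : E)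
    {g : G} (hg : g ∈ K) :
    π g (∫ k : K, π k w ∂μK) = ∫ k : K, π k w ∂μK := by
  calc π g (∫ k : K, π k w ∂μK) = ∫ k : K, π g (π k w) ∂μK :=
        ((π g).toLinearIsometry.integral_comp_comm _).symm
    _ = ∫ k : K, π k w ∂μK := by
      simpa using integral_mul_left_eq_self (fun k : K => π k w) ⟨g, hg⟩

variable [NormedAddCommGroup E] [InnerProductSpace 𝕜 E] [NormedSpace ℝ E] [CompleteSpace E]
  [IsProbabilityMeasure μK] {π : G →* (E ≃ₗᵢ[𝕜] E)} {v w : E}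

theorem inner_integral_orbit_of_fixed (hw : Integrable (fun k : K => π k w) μK)
    (hfix : ∀ k ∈ K, π k v = v) :
    ⟪v, ∫ k : K, π k w ∂μK⟫_𝕜 = ⟪v, w⟫_𝕜 := by
  have hinner (k : K) : ⟪v, π k w⟫_𝕜 = ⟪v, w⟫_𝕜 := by
    conv_lhs => rw [← hfix k k.2]
    exact (π k).inner_map_map v w
  simp [← integral_inner hw, hinner]

theorem integral_orbit_eq_inner_smul [MeasurableMul K] [μK.IsMulLeftInvariant]
    (hw : Integrable (fun k : K => π k w) μK) (hv : ‖v‖ = 1) (hfix : ∀ k ∈ K, π k v = v)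
    (huniq : ∀ u : E, (∀ k ∈ K, π k u = u) → ∃ c : 𝕜, u = c • v) :
    ∫ k : K, π k w ∂μK = ⟪v, w⟫_𝕜 • v := by
  obtain ⟨c, hc⟩ := huniq _ fun k hk => map_integral_orbit_of_mem μK π w hk
  have hc' : c = ⟪v, w⟫_𝕜 := by
    rw [← inner_integral_orbit_of_fixed μK hw hfix, hc, inner_smul_right,
      inner_self_eq_norm_sq_to_K, hv]
    simp
  rw [hc, hc']

end OrbitAverage

theorem statement14_general {G : Type*} [Group G]
    {H : Type*} [NormedAddCommGroup H] [InnerProductSpace ℂ H] [CompleteSpace H]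
    (K : Subgroup G)
    [TopologicalSpace K] [IsTopologicalGroup K] [CompactSpace K]
    [MeasurableSpace K] [BorelSpace K]
    (μK : Measure K) [IsProbabilityMeasure μK] [μK.IsMulLeftInvariant]
    (π : G →* (H ≃ₗᵢ[ℂ] H))
    (hcont : ∀ w : H, Continuous fun k : K => π (k : G) w)
    (v : H) (hv : ‖v‖ = 1)
    (hfix : ∀ k ∈ K, π k v = v)
    (huniq : ∀ w : H, (∀ k ∈ K, π k w = w) → ∃ c : ℂ, w = c • v)
    (s t : G) :
    ∫ k : K, ⟪π (s * (k : G) * t) v, v⟫_ℂ ∂μK = ⟪π s v, v⟫_ℂ * ⟪π t v, v⟫_ℂ := by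
  have horbit : Integrable (fun k : K => π k (π t v)) μK :=
    (hcont _).integrable_of_hasCompactSupport (.of_compactSpace _)
  calc ∫ k : K, ⟪π (s * (k : G) * t) v, v⟫_ℂ ∂μK
      = ∫ k : K, ⟪π s (π k (π t v)), v⟫_ℂ ∂μK := by simp
    _ = ⟪π s (∫ k : K, π k (π t v) ∂μK), v⟫_ℂ := by
      rw [integral_inner_const (f := fun k : K => π s (π k (π t v)))
        (((π s).continuous.comp (hcont _)).integrable_of_hasCompactSupport (.of_compactSpace _))]
      exact congrArg (⟪·, v⟫_ℂ) ((π s).toLinearIsometry.integral_comp_comm _)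
    _ = ⟪π s v, v⟫_ℂ * ⟪π t v, v⟫_ℂ := by
      rw [integral_orbit_eq_inner_smul μK horbit hv hfix huniq, map_smul, inner_smul_left,
        inner_conj_symm, mul_comm]

/-- Let `π` be a unitary representation of a group `G` on a complex Hilbert space `H`,
`K ≤ G` a subgroup which is a compact Hausdorff topological group with normalized Haar
probability measure `μ_K`, such that `k ↦ π(k)w` is continuous on `K` for every `w`.
If `v` is a `K`-fixed unit vector and every `K`-fixed vector is a multiple of `v`, then
the matrix coefficient `s ↦ ⟨π(s)v, v⟩` satisfies the spherical identity
`∫_K ⟨π(s k t)v, v⟩ dμ_K(k) = ⟨π(s)v, v⟩·⟨π(t)v, v⟩`. -/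
theorem statement14 {G : Type*} [Group G]
    {H : Type*} [NormedAddCommGroup H] [InnerProductSpace ℂ H] [CompleteSpace H]
    (K : Subgroup G)
    [TopologicalSpace K] [IsTopologicalGroup K] [CompactSpace K] [T2Space K]
    [MeasurableSpace K] [BorelSpace K]
    (μK : Measure K) [IsProbabilityMeasure μK] [μK.IsMulLeftInvariant]
    (π : G →* (H ≃ₗᵢ[ℂ] H))
    (hcont : ∀ w : H, Continuous fun k : K => π (k : G) w)
    (v : H) (hv : ‖v‖ = 1)
    (hfix : ∀ k ∈ K, π k v = v)
    (huniq : ∀ w : H, (∀ k ∈ K, π k w = w) → ∃ c : ℂ, w = c • v)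
    (s t : G) :
    ∫ k : K, ⟪π (s * (k : G) * t) v, v⟫_ℂ ∂μK = ⟪π s v, v⟫_ℂ * ⟪π t v, v⟫_ℂ :=
  statement14_general K μK π hcont v hv hfix huniq s t
end
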